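/- Let R be a finite (not necessarily unital) ring. Then |Cent(R)| = 5 if and only if the additive quotient group R/Z(R) is isomorphic (as an additive group) to ℤ_3 × ℤ_3. -/

import Mathlib

/-!
Centralizers contain the centre `Z`, so each is the preimage of a subgroup of `V = R ⧸ Z`,
and `C(r) = R` exactly when `r` is central.

If `V ≅ ℤ₃²`, a proper centralizer `C(r)` maps onto a proper subgroup of `V` containing the
nonzero class of `r`, i.e. onto the line through it; the four lines of `ℤ₃²` and `R` itself
are the five centralizers.

Conversely, if a noncentral `r` commutes with two noncommuting elements `s, t`, then
`R, C(s), C(t), C(s + t)` contain `r` while `C(x), C(r + x)` do not, for any `x ∉ C(r)`: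
six centralizers. So with five, noncentral commuting elements have equal centralizers, and
the four proper centralizers partition `V` into four nontrivial subgroups `Kᵢ`. Then
`∑ (|Kᵢ| - 1) = |V| - 1` and `|Kᵢ| |Kⱼ| ∣ |V|` force `|Kᵢ| = 3` and `|V| = 9`, so `V` is
an `𝔽₃`-plane.
-/

/-- The centralizer of `r` in a (not necessarily unital) ring: `{s | r*s = s*r}`. -/
def rCentralizer {R : Type*} [NonUnitalRing R] (r : R) : Set R := {s | r * s = s * r}

/-- The set of all centralizers of elements of `R`. -/
def Cent (R : Type*) [NonUnitalRing R] : Set (Set R) :=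
  Set.range (fun r : R => rCentralizer r)

/-- The center of a (not necessarily unital) ring, as a set. -/
def rCenter (R : Type*) [NonUnitalRing R] : Set R := {s | ∀ r : R, r * s = s * r}

/-- The center of a (not necessarily unital) ring, as an additive subgroup. -/
def centerAddSubgroup (R : Type*) [NonUnitalRing R] : AddSubgroup R where
  carrier := {s | ∀ r : R, r * s = s * r}
  zero_mem' := by intro r; rw [mul_zero, zero_mul]
  add_mem' := by intro a b ha hb r; rw [mul_add, add_mul, ha r, hb r]
  neg_mem' := by intro a ha r; rw [mul_neg, neg_mul, ha r]

open Set AddSubgroup Function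

theorem AddSubgroup.eq_zmultiples_of_card_eq_prime_sq {G : Type*} [AddGroup G] {p : ℕ}
    [hp : Fact p.Prime] (hG : Nat.card G = p ^ 2) {H : AddSubgroup G} (hH : H ≠ ⊤) {g : G}
    (hg : g ∈ H) (hg0 : g ≠ 0) : H = zmultiples g := by
  have : Finite G := Nat.finite_of_card_ne_zero (by rw [hG]; exact pow_ne_zero 2 hp.out.ne_zero)
  have hgH : zmultiples g ≤ H := zmultiples_le.mpr hg
  obtain ⟨m, hm, hHm⟩ := (Nat.dvd_prime_pow hp.out).mp (hG ▸ H.card_addSubgroup_dvd_card)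
  have hHp : Nat.card H = p := by
    interval_cases m
    · rw [pow_zero, card_eq_one] at hHm
      exact absurd (mem_bot.mp (hHm ▸ hg)) hg0
    · exact hHm.trans (pow_one p)
    · exact absurd ((card_eq_iff_eq_top H).mp (hHm.trans hG.symm)) hH
  have hgp : Nat.card (zmultiples g) = p := by
    have hdvd := hHp ▸ card_dvd_of_le hgH
    rw [Nat.card_zmultiples] at hdvd ⊢
    exact ((Nat.dvd_prime hp.out).mp hdvd).resolve_left (mt AddMonoid.addOrderOf_eq_one_iff.mp hg0)
  exact (eq_of_le_of_card_ge hgH (hHp.trans hgp.symm).le).symm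

theorem ncard_range_zmultiples_or_top :
    (range fun g : ZMod 3 × ZMod 3 => if g = 0 then ⊤ else zmultiples g).ncard = 5 := by
  -- a decidable copy of these subgroups, so that the count is a finite computation
  let D : ZMod 3 × ZMod 3 → Finset (ZMod 3 × ZMod 3) := fun g =>
    Finset.univ.filter fun h => g = 0 ∨ ∃ k : ZMod 3, k • g = h
  have hD : ∀ g, ((if g = 0 then ⊤ else zmultiples g : AddSubgroup _) : Set _) =
      (D g : Set (ZMod 3 × ZMod 3)) := by
    intro g
    ext h
    split_ifs with hg
    · simp [D, hg]
    · simp [D, hg, mem_zmultiples_iff, ZMod.intCast_surjective.exists, Int.cast_smul_eq_zsmul]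
  calc _ = (SetLike.coe '' range fun g : ZMod 3 × ZMod 3 =>
          if g = 0 then ⊤ else zmultiples g).ncard :=
        (ncard_image_of_injective _ SetLike.coe_injective).symm
    _ = ((fun s : Finset (ZMod 3 × ZMod 3) => (s : Set (ZMod 3 × ZMod 3))) '' range D).ncard := by
        simp only [← range_comp, comp_def, hD]
    _ = (Finset.univ.image D).card := by
        rw [ncard_image_of_injective _ Finset.coe_injective, ← ncard_coe_finset,
          Finset.coe_image, Finset.coe_univ, image_univ]
    _ = 5 := by decide

theorem AddSubgroup.card_mul_card_dvd_of_disjoint {V : Type*} [AddCommGroup V] [Finite V]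
    {H K : AddSubgroup V} (h : Disjoint H K) : Nat.card H * Nat.card K ∣ Nat.card V := by
  have hinj : Injective ((QuotientAddGroup.mk' H).comp K.subtype) := by
    rw [injective_iff_map_eq_zero]
    rintro ⟨k, hk⟩ h0
    exact Subtype.ext (disjoint_def.mp h ((QuotientAddGroup.eq_zero_iff k).mp h0) hk)
  rw [H.card_eq_card_quotient_mul_card_addSubgroup, mul_comm]
  exact mul_dvd_mul_right (card_dvd_of_injective _ hinj) _

theorem AddSubgroup.sum_card_sub_one_eq_of_partition {V : Type*} [AddCommGroup V] [Finite V]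
    {ι : Type*} [Fintype ι] {K : ι → AddSubgroup V} (hdisj : Pairwise (Disjoint on K))
    (hcover : ∀ v, ∃ i, v ∈ K i) :
    ∑ i, (Nat.card (K i) - 1) = Nat.card V - 1 := by
  classical
  cases nonempty_fintype V
  let nonzero : ι → Finset V := fun i => (Finset.univ.filter (· ∈ K i)).erase 0
  have hcard : ∀ i, (nonzero i).card = Nat.card (K i) - 1 := by
    intro i
    rw [Finset.card_erase_of_mem (by simp), Nat.card_eq_fintype_card, Fintype.card_subtype]
  have hunion : Finset.univ.erase 0 = Finset.univ.biUnion nonzero := by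
    ext v
    simpa [nonzero] using fun _ => hcover v
  have hpd : ((Finset.univ : Finset ι) : Set ι).PairwiseDisjoint nonzero := by
    intro i _ j _ hij
    simp only [Function.onFun, Finset.disjoint_left, nonzero, Finset.mem_erase,
      Finset.mem_filter, Finset.mem_univ, true_and]
    exact fun v hvi hvj => hvi.1 (disjoint_def.mp (hdisj hij) hvi.2 hvj.2)
  simp_rw [← hcard]
  rw [← Finset.card_biUnion hpd, ← hunion, Finset.card_erase_of_mem (Finset.mem_univ 0),
    Finset.card_univ, Nat.card_eq_fintype_card]

theorem le_three_of_mul_le {a b c d n : ℕ} (hb : 2 ≤ b)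
    (hsum : n + 3 ≤ a + b + c + d) (hab : a * b ≤ n) (hac : a * c ≤ n) (had : a * d ≤ n) :
    a ≤ 3 := by
  -- `a (n + 3 - a) ≤ a (b + c + d) ≤ 3n` gives `n ≤ a` if `a > 3`, against `2a ≤ ab ≤ n`
  by_contra! ha
  nlinarith

theorem eq_three_of_pairwise_mul_dvd {a b c d n : ℕ} (ha : 2 ≤ a) (hb : 2 ≤ b) (hc : 2 ≤ c)
    (hd : 2 ≤ d) (hsum : a + b + c + d = n + 3) (hab : a * b ∣ n) (hac : a * c ∣ n)
    (had : a * d ∣ n) (hbc : b * c ∣ n) (hbd : b * d ∣ n) (hcd : c * d ∣ n) :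
    a = 3 ∧ b = 3 ∧ c = 3 ∧ d = 3 := by
  have hn : 0 < n := by omega
  have hab' := Nat.le_of_dvd hn hab
  have hac' := Nat.le_of_dvd hn hac
  have had' := Nat.le_of_dvd hn had
  have hbc' := Nat.le_of_dvd hn hbc
  have hbd' := Nat.le_of_dvd hn hbd
  have hcd' := Nat.le_of_dvd hn hcd
  have ha3 := le_three_of_mul_le hb hsum.ge hab' hac' had'
  have hb3 := le_three_of_mul_le ha (by omega) (mul_comm a b ▸ hab') hbc' hbd'
  have hc3 := le_three_of_mul_le ha (by omega) (mul_comm a c ▸ hac')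
    (mul_comm b c ▸ hbc') hcd'
  have hd3 := le_three_of_mul_le ha (by omega) (mul_comm a d ▸ had')
    (mul_comm b d ▸ hbd') (mul_comm c d ▸ hcd')
  interval_cases a <;> interval_cases b <;> interval_cases c <;> interval_cases d <;> omega

theorem nonempty_addEquiv_zmod_prod_of_card_eq_sq {V : Type*} [AddCommGroup V] {p : ℕ}
    [hp : Fact p.Prime] [Module (ZMod p) V] (hV : Nat.card V = p ^ 2) :
    Nonempty (V ≃+ ZMod p × ZMod p) := by
  have : Finite V := Nat.finite_of_card_ne_zero (by rw [hV]; exact pow_ne_zero 2 hp.out.ne_zero)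
  have hrank : Module.finrank (ZMod p) V = 2 := by
    have h := Module.natCard_eq_pow_finrank (K := ZMod p) (V := V)
    rw [hV, Nat.card_zmod] at h
    exact (Nat.pow_right_injective hp.out.two_le h).symm
  exact ⟨(LinearEquiv.ofFinrankEq V (ZMod p × ZMod p)
    (by rw [hrank, Module.finrank_prod, Module.finrank_self])).toAddEquiv⟩

theorem AddSubgroup.nonempty_addEquiv_zmod_three_prod_of_partition {V : Type*} [AddCommGroup V]
    [Finite V] {K : Fin 4 → AddSubgroup V} (hK : ∀ i, K i ≠ ⊥)
    (hdisj : Pairwise (Disjoint on K)) (hcover : ∀ v, ∃ i, v ∈ K i) :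
    Nonempty (V ≃+ ZMod 3 × ZMod 3) := by
  have htwo : ∀ i, 2 ≤ Nat.card (K i) := fun i => (one_lt_card_iff_ne_bot _).mpr (hK i)
  have hdvd : ∀ i j, i ≠ j → Nat.card (K i) * Nat.card (K j) ∣ Nat.card V :=
    fun i j hij => card_mul_card_dvd_of_disjoint (hdisj hij)
  have hsum := sum_card_sub_one_eq_of_partition hdisj hcover
  rw [Fin.sum_univ_four] at hsum
  have hV : 0 < Nat.card V := Nat.card_pos
  obtain ⟨h0, h1, h2, h3⟩ := eq_three_of_pairwise_mul_dvd (htwo 0) (htwo 1) (htwo 2) (htwo 3)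
    (by have := htwo 0; have := htwo 1; have := htwo 2; have := htwo 3; omega)
    (hdvd 0 1 (by decide)) (hdvd 0 2 (by decide)) (hdvd 0 3 (by decide))
    (hdvd 1 2 (by decide)) (hdvd 1 3 (by decide)) (hdvd 2 3 (by decide))
  have hthree : ∀ i, Nat.card (K i) = 3 := by
    intro i
    fin_cases i <;> assumption
  have hexp : ∀ v : V, 3 • v = 0 := by
    intro v
    obtain ⟨i, hi⟩ := hcover v
    simpa [hthree i] using congrArg Subtype.val (card_nsmul_eq_zero' (x := (⟨v, hi⟩ : K i)))
  let := AddCommGroup.zmodModule hexp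
  exact nonempty_addEquiv_zmod_prod_of_card_eq_sq (by omega)

section Centralizer

variable {R : Type*} [NonUnitalRing R]

def rCentralizerAddSubgroup (r : R) : AddSubgroup R where
  carrier := rCentralizer r
  zero_mem' := by simp [rCentralizer]
  add_mem' {a b} (ha : r * a = a * r) (hb : r * b = b * r) := by
    simp [rCentralizer, mul_add, add_mul, ha, hb]
  neg_mem' {a} (ha : r * a = a * r) := by simp [rCentralizer, ha]

@[simp]
theorem coe_rCentralizerAddSubgroup (r : R) :
    (rCentralizerAddSubgroup r : Set R) = rCentralizer r := rfl

theorem mem_rCentralizer_comm {r s : R} : s ∈ rCentralizer r ↔ r ∈ rCentralizer s := eq_comm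

theorem self_mem_rCentralizer (r : R) : r ∈ rCentralizer r := rfl

theorem centerAddSubgroup_le_rCentralizerAddSubgroup (r : R) :
    centerAddSubgroup R ≤ rCentralizerAddSubgroup r := fun _ hs => hs r

theorem rCentralizer_eq_univ_iff {r : R} : rCentralizer r = univ ↔ r ∈ centerAddSubgroup R := by
  simp only [eq_univ_iff_forall, mem_rCentralizer_comm (r := r)]
  rfl

theorem add_mem_rCentralizer_iff {r s : R} : r + s ∈ rCentralizer r ↔ s ∈ rCentralizer r :=
  (rCentralizerAddSubgroup r).add_mem_cancel_left (self_mem_rCentralizer r)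

theorem ncard_insert_univ_rCentralizer {s t : R} (hst : t ∉ rCentralizer s) :
    ({univ, rCentralizer s, rCentralizer t, rCentralizer (s + t)} : Set (Set R)).ncard = 4 := by
  have hts : s ∉ rCentralizer t := mem_rCentralizer_comm.not.mp hst
  have hs : s ∉ rCentralizer (s + t) := by
    rwa [← mem_rCentralizer_comm, add_mem_rCentralizer_iff]
  have ht : t ∉ rCentralizer (s + t) := by
    rwa [← mem_rCentralizer_comm, add_comm, add_mem_rCentralizer_iff]
  rw [ncard_insert_of_notMem, ncard_insert_of_notMem, ncard_pair]
  · exact ne_of_mem_of_not_mem' (self_mem_rCentralizer t) ht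
  · simp only [mem_insert_iff, mem_singleton_iff, not_or]
    exact ⟨ne_of_mem_of_not_mem' (self_mem_rCentralizer s) hts,
      ne_of_mem_of_not_mem' (self_mem_rCentralizer s) hs⟩
  · simp only [mem_insert_iff, mem_singleton_iff, not_or]
    exact ⟨ne_of_mem_of_not_mem' (mem_univ t) hst, ne_of_mem_of_not_mem' (mem_univ s) hts,
      ne_of_mem_of_not_mem' (mem_univ s) hs⟩

theorem six_le_ncard_cent [Finite R] {r s t : R} (hr : r ∉ centerAddSubgroup R)
    (hs : s ∈ rCentralizer r) (ht : t ∈ rCentralizer r) (hst : t ∉ rCentralizer s) :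
    6 ≤ (Cent R).ncard := by
  obtain ⟨x, hx⟩ : ∃ x, x ∉ rCentralizer r := by
    simpa [eq_univ_iff_forall] using mt rCentralizer_eq_univ_iff.mp hr
  have hcent : ∀ a : R, rCentralizer a ∈ Cent R := fun a => ⟨a, rfl⟩
  have hin : {univ, rCentralizer s, rCentralizer t, rCentralizer (s + t)} ⊆
      Cent R ∩ {C | r ∈ C} := by
    have hst' : r ∈ rCentralizer (s + t) :=
      mem_rCentralizer_comm.mp ((rCentralizerAddSubgroup r).add_mem hs ht)
    rintro C (rfl | rfl | rfl | rfl)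
    · exact ⟨⟨0, by simp [rCentralizer]⟩, mem_univ r⟩
    · exact ⟨hcent s, mem_rCentralizer_comm.mp hs⟩
    · exact ⟨hcent t, mem_rCentralizer_comm.mp ht⟩
    · exact ⟨hcent _, hst'⟩
  have hout : {rCentralizer x, rCentralizer (r + x)} ⊆ Cent R \ {C | r ∈ C} := by
    have hrx : r ∉ rCentralizer (r + x) := by
      rwa [← mem_rCentralizer_comm, add_mem_rCentralizer_iff]
    rintro C (rfl | rfl)
    · exact ⟨hcent x, mem_rCentralizer_comm.not.mp hx⟩
    · exact ⟨hcent _, hrx⟩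
  have hx' : x ∉ rCentralizer (r + x) := by
    rwa [← mem_rCentralizer_comm, add_comm, add_mem_rCentralizer_iff, mem_rCentralizer_comm]
  calc 6 = ({univ, rCentralizer s, rCentralizer t, rCentralizer (s + t)} : Set (Set R)).ncard
        + ({rCentralizer x, rCentralizer (r + x)} : Set (Set R)).ncard := by
        rw [ncard_insert_univ_rCentralizer hst,
          ncard_pair (ne_of_mem_of_not_mem' (self_mem_rCentralizer x) hx')]
    _ ≤ (Cent R ∩ {C | r ∈ C}).ncard + (Cent R \ {C | r ∈ C}).ncard :=
        add_le_add (ncard_le_ncard hin (toFinite _)) (ncard_le_ncard hout (toFinite _))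
    _ = (Cent R).ncard := ncard_inter_add_ncard_sdiff_eq_ncard _ _ (toFinite _)

theorem mem_rCentralizer_of_ncard_cent_le_five [Finite R] (h5 : (Cent R).ncard ≤ 5) {r s t : R}
    (hr : r ∉ centerAddSubgroup R) (hs : s ∈ rCentralizer r) (ht : t ∈ rCentralizer r) :
    t ∈ rCentralizer s := by
  by_contra hst
  have := six_le_ncard_cent hr hs ht hst
  omega

theorem rCentralizer_eq_of_ncard_cent_le_five [Finite R] (h5 : (Cent R).ncard ≤ 5) {r s : R}
    (hr : r ∉ centerAddSubgroup R) (hs : s ∉ centerAddSubgroup R) (hrs : s ∈ rCentralizer r) :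
    rCentralizer s = rCentralizer r := by
  ext t
  constructor
  · intro ht
    exact mem_rCentralizer_comm.mp
      (mem_rCentralizer_of_ncard_cent_le_five h5 hs ht (mem_rCentralizer_comm.mp hrs))
  · exact mem_rCentralizer_of_ncard_cent_le_five h5 hr hrs

end Centralizer

section Image

variable {R G : Type*} [NonUnitalRing R] [AddCommGroup G]

def centralizerImage (φ : R →+ G) (r : R) : AddSubgroup G := (rCentralizerAddSubgroup r).map φ

variable {φ : R →+ G}

theorem apply_mem_centralizerImage_iff (hφ : φ.ker ≤ centerAddSubgroup R) {r s : R} :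
    φ s ∈ centralizerImage φ r ↔ s ∈ rCentralizer r := by
  rw [← mem_comap, centralizerImage,
    comap_map_eq_self (hφ.trans (centerAddSubgroup_le_rCentralizerAddSubgroup r))]
  rfl

theorem centralizerImage_eq_top_iff (hφ : Surjective φ)
    (hker : φ.ker ≤ centerAddSubgroup R) {r : R} :
    centralizerImage φ r = ⊤ ↔ r ∈ centerAddSubgroup R := by
  rw [← rCentralizer_eq_univ_iff, eq_top_iff', eq_univ_iff_forall, hφ.forall]
  simp only [apply_mem_centralizerImage_iff hker]

theorem ncard_cent_eq_ncard_range_centralizerImage (hφ : Surjective φ)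
    (hker : φ.ker ≤ centerAddSubgroup R) :
    (Cent R).ncard = (range (centralizerImage φ)).ncard := by
  have hCent : Cent R = (fun H : AddSubgroup G => φ ⁻¹' H) '' range (centralizerImage φ) := by
    rw [Cent, ← range_comp]
    congr 1
    funext r
    ext s
    exact (apply_mem_centralizerImage_iff hker).symm
  rw [hCent]
  exact ncard_image_of_injective _ fun H K h => SetLike.coe_injective (preimage_injective.mpr hφ h)

theorem centralizerImage_eq_zmultiples {p : ℕ} [Fact p.Prime] (hφ : Surjective φ)
    (hker : φ.ker ≤ centerAddSubgroup R) (hG : Nat.card G = p ^ 2) {r : R}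
    (hr : r ∉ centerAddSubgroup R) : centralizerImage φ r = zmultiples (φ r) :=
  eq_zmultiples_of_card_eq_prime_sq hG (mt (centralizerImage_eq_top_iff hφ hker).mp hr)
    (mem_map_of_mem φ (self_mem_rCentralizer r)) fun h => hr (hker h)

theorem range_centralizerImage [DecidableEq G] {p : ℕ} [Fact p.Prime] (hφ : Surjective φ)
    (hker : φ.ker = centerAddSubgroup R) (hG : Nat.card G = p ^ 2) :
    range (centralizerImage φ) = range fun g : G => if g = 0 then ⊤ else zmultiples g := by
  rw [← hφ.range_comp]
  congr 1
  funext r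
  by_cases hr : r ∈ centerAddSubgroup R
  · rw [comp_apply, if_pos (AddMonoidHom.mem_ker.mp (hker.ge hr)),
      (centralizerImage_eq_top_iff hφ hker.le).mpr hr]
  · have h0 : φ r ≠ 0 := fun h => hr (hker.le h)
    rw [comp_apply, if_neg h0, centralizerImage_eq_zmultiples hφ hker.le hG hr]

end Image

theorem ncard_cent_eq_five_of_addEquiv {R : Type*} [NonUnitalRing R]
    (e : (R ⧸ centerAddSubgroup R) ≃+ ZMod 3 × ZMod 3) : (Cent R).ncard = 5 := by
  let φ : R →+ ZMod 3 × ZMod 3 := e.toAddMonoidHom.comp (QuotientAddGroup.mk' _)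
  have hφ : Surjective φ := e.surjective.comp (QuotientAddGroup.mk'_surjective _)
  have hker : φ.ker = centerAddSubgroup R := by
    ext r
    simp [φ]
  have hcard : Nat.card (ZMod 3 × ZMod 3) = 3 ^ 2 := by simp
  rw [ncard_cent_eq_ncard_range_centralizerImage hφ hker.le, range_centralizerImage hφ hker hcard,
    ncard_range_zmultiples_or_top]

section Converse

variable {R : Type*} [NonUnitalRing R] [Finite R]

theorem disjoint_centralizerImage {G : Type*} [AddCommGroup G] {φ : R →+ G}
    (hker : φ.ker = centerAddSubgroup R) (h5 : (Cent R).ncard ≤ 5) {r s : R}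
    (hr : r ∉ centerAddSubgroup R) (hs : s ∉ centerAddSubgroup R)
    (hne : centralizerImage φ r ≠ centralizerImage φ s) :
    Disjoint (centralizerImage φ r) (centralizerImage φ s) := by
  rw [disjoint_def]
  rintro _ ⟨u, hur, rfl⟩ hus
  rw [apply_mem_centralizerImage_iff hker.le] at hus
  by_contra hu0
  have hu : u ∉ centerAddSubgroup R := fun h => hu0 (hker.ge h)
  refine hne (congrArg (map φ) (SetLike.coe_injective ?_))
  simp only [coe_rCentralizerAddSubgroup]
  rw [← rCentralizer_eq_of_ncard_cent_le_five h5 hr hu hur,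
    rCentralizer_eq_of_ncard_cent_le_five h5 hs hu hus]

theorem nonempty_addEquiv_of_ncard_cent_eq_five (h5 : (Cent R).ncard = 5) :
    Nonempty ((R ⧸ centerAddSubgroup R) ≃+ ZMod 3 × ZMod 3) := by
  let φ := QuotientAddGroup.mk' (centerAddSubgroup R)
  have hφ : Surjective φ := QuotientAddGroup.mk'_surjective _
  have hker : φ.ker = centerAddSubgroup R := QuotientAddGroup.ker_mk' _
  have htop {r : R} := centralizerImage_eq_top_iff hφ hker.le (r := r)
  let 𝒦 := range (centralizerImage φ) \ {⊤}
  have mem_𝒦 : ∀ H ∈ 𝒦, ∃ r ∉ centerAddSubgroup R, centralizerImage φ r = H := by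
    rintro H ⟨⟨r, rfl⟩, hH⟩
    exact ⟨r, mt htop.mpr hH, rfl⟩
  have hcard : Nat.card 𝒦 = 4 := by
    have htop_mem : ⊤ ∈ range (centralizerImage φ) := ⟨0, htop.mpr (zero_mem _)⟩
    rw [Nat.card_coe_set_eq, ncard_sdiff_singleton_of_mem htop_mem,
      ← ncard_cent_eq_ncard_range_centralizerImage hφ hker.le, h5]
  obtain ⟨e⟩ : Nonempty (Fin 4 ≃ 𝒦) := Finite.card_eq.mp (by rw [hcard, Nat.card_fin])
  refine nonempty_addEquiv_zmod_three_prod_of_partition (K := fun i => e i) ?_ ?_ ?_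
  · intro i
    obtain ⟨r, hr, hrK⟩ := mem_𝒦 _ (e i).2
    rw [← hrK, Ne, eq_bot_iff_forall]
    exact fun h => hr (hker.le (h _ (mem_map_of_mem φ (self_mem_rCentralizer r))))
  · intro i j hij
    obtain ⟨r, hr, hrK⟩ := mem_𝒦 _ (e i).2
    obtain ⟨s, hs, hsK⟩ := mem_𝒦 _ (e j).2
    have hne : (e i : AddSubgroup (R ⧸ centerAddSubgroup R)) ≠ e j :=
      fun h => hij (e.injective (Subtype.ext h))
    show Disjoint (e i : AddSubgroup (R ⧸ centerAddSubgroup R)) (e j : AddSubgroup _)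
    rw [← hrK, ← hsK] at hne ⊢
    exact disjoint_centralizerImage hker h5.le hr hs hne
  · intro v
    obtain ⟨r, rfl⟩ := hφ v
    by_cases hr : r ∈ centerAddSubgroup R
    · have h0 : φ r = 0 := hker.ge hr
      exact ⟨0, h0 ▸ zero_mem _⟩
    · obtain ⟨i, hi⟩ := e.surjective ⟨centralizerImage φ r, ⟨r, rfl⟩, mt htop.mp hr⟩
      exact ⟨i, by rw [hi]; exact mem_map_of_mem φ (self_mem_rCentralizer r)⟩

end Converse

/-- A finite ring has exactly `5` centralizers iff `R/Z(R) ≅ ℤ_3 × ℤ_3`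
as additive groups. -/
theorem five_centralizer_iff (R : Type*) [NonUnitalRing R] [Finite R] :
    (Cent R).ncard = 5 ↔
      Nonempty ((R ⧸ centerAddSubgroup R) ≃+ (ZMod 3 × ZMod 3)) :=
  ⟨nonempty_addEquiv_of_ncard_cent_eq_five, fun ⟨e⟩ => ncard_cent_eq_five_of_addEquiv e⟩
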